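/- Let E be a row-finite graph. There is a bijection between the set of cycles without exits in E and the set of orbits of minimal periodic elements of M_E^{gr} under the ℤ-action, sending a cycle c to the orbit of (the class of) any vertex on c; moreover, under this bijection the length of the cycle equals the cardinality of the corresponding orbit. -/

import Mathlib

/-!
The rewriting `v(i) → Σ_{e ∈ s⁻¹(v)} r(e)(i+1)` is confluent, so two multisets of generators
define the same element of `M_E^{gr}` iff they rewrite to a common multiset. Weighting `v(i)` by
the number of paths from `v` that reach a fixed level `m` (or stop early at a sink) is invariant
under rewriting below `m`, and shows that `x + y = x` forces `y = 0`. Hence a minimal element is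
an atom and is represented by a single generator `v(i)`. If it is also periodic, `v` is not a sink
(sinks do not rewrite) and emits exactly one edge (an atom rewrites to an atom); the same then
holds all along the path out of `v`, which must eventually run around a cycle without exit.
Conversely, for `v` on a cycle without exit of length `ℓ`, `v(i)` only rewrites along the cycle,
so `v(n) = v(m)` iff `n ≡ m [ZMOD ℓ]`: the orbit of `v(0)` has `ℓ` elements and determines the
cycle.
-/

set_option linter.unusedSectionVars false

/-- The algebraic preorder on a commutative monoid: `a ≤ b` iff `b = a + c` for some `c`. -/
def algLE {M : Type*} [AddCommMonoid M] (a b : M) : Prop := ∃ c, b = a + c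

/-- A row-finite directed graph: vertices `V`, edges `Ed`, source `s`, range `r`,
and for each vertex the (finite) set of edges it emits. -/
structure RFGraph (V : Type) (Ed : Type) where
  s : Ed → V
  r : Ed → V
  emit : V → Finset Ed
  mem_emit : ∀ e v, e ∈ emit v ↔ s e = v

namespace RFGraph

variable {V Ed : Type} [DecidableEq V] (G : RFGraph V Ed)

/-- The one-step rewriting relation `→₁` on the free commutative monoid `Multiset V`:
replace one occurrence of a non-sink vertex `v` by the sum of ranges of edges emitted by `v`. -/
def Step1 (a b : Multiset V) : Prop :=
  ∃ v : V, v ∈ a ∧ G.emit v ≠ ∅ ∧ b = a.erase v + (G.emit v).val.map G.r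

/-- The reflexive-transitive closure `→` of `→₁`. -/
def Step : Multiset V → Multiset V → Prop := Relation.ReflTransGen G.Step1

/-- The congruence on the free commutative monoid generated by `→₁`. -/
def gcon : AddCon (Multiset V) := addConGen G.Step1

/-- The graph monoid `M_E`. -/
def GM := G.gcon.Quotient

instance : AddCommMonoid G.GM := inferInstanceAs (AddCommMonoid G.gcon.Quotient)

/-- One-step rewriting for the talented monoid: replace `v(i)` by `Σ_{e ∈ s⁻¹(v)} r(e)(i+1)`. -/
def TStep1 (a b : Multiset (V × ℤ)) : Prop :=
  ∃ (v : V) (i : ℤ), (v, i) ∈ a ∧ G.emit v ≠ ∅ ∧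
    b = a.erase (v, i) + (G.emit v).val.map (fun e => (G.r e, i + 1))

/-- The congruence generated by the talented one-step relation. -/
def tcon : AddCon (Multiset (V × ℤ)) := addConGen G.TStep1

/-- The talented monoid `M_E^{gr}`. -/
def TM := G.tcon.Quotient

instance : AddCommMonoid G.TM := inferInstanceAs (AddCommMonoid G.tcon.Quotient)

/-- The generator `v(i)` of the talented monoid. -/
def tgen (v : V) (i : ℤ) : G.TM := G.tcon.mk' {(v, i)}

/-- The shift `v(i) ↦ v(i+n)` on the free commutative monoid `Multiset (V × ℤ)`. -/
def shiftMul (n : ℤ) : Multiset (V × ℤ) →+ Multiset (V × ℤ) where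
  toFun a := a.map fun p => (p.1, p.2 + n)
  map_zero' := rfl
  map_add' a b := Multiset.map_add (fun p => (p.1, p.2 + n)) a b

lemma shift_inj (n : ℤ) : Function.Injective (fun p : V × ℤ => (p.1, p.2 + n)) := by
  rintro ⟨a, b⟩ ⟨c, d⟩ h
  simp only [Prod.mk.injEq] at h
  exact Prod.ext h.1 (by omega)

lemma tstep1_shift (n : ℤ) {a b : Multiset (V × ℤ)} (h : G.TStep1 a b) :
    G.TStep1 (shiftMul n a) (shiftMul n b) := by
  obtain ⟨v, i, hv, hne, rfl⟩ := h
  refine ⟨v, i + n, Multiset.mem_map.2 ⟨(v, i), hv, rfl⟩, hne, ?_⟩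
  show Multiset.map _ _ = _
  rw [Multiset.map_add]
  congr 1
  · exact (Multiset.map_erase _ (shift_inj n) (v, i) a)
  · rw [Multiset.map_map]
    congr 1
    funext e
    simp only [Function.comp_apply]
    congr 1
    omega

lemma tcon_shift (n : ℤ) {a b : Multiset (V × ℤ)} (h : G.tcon a b) :
    G.tcon (shiftMul n a) (shiftMul n b) := by
  have hle : addConGen G.TStep1 ≤
      { r := fun a b => G.tcon (shiftMul n a) (shiftMul n b)
        iseqv := ⟨fun _ => G.tcon.refl _, fun h => G.tcon.symm h,
          fun h₁ h₂ => G.tcon.trans h₁ h₂⟩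
        add' := fun h₁ h₂ => by
          simpa only [map_add] using G.tcon.add h₁ h₂ } := by
    refine AddCon.addConGen_le.2 fun x y hxy => ?_
    exact AddConGen.Rel.of _ _ (G.tstep1_shift n hxy)
  exact hle h

/-- The `ℤ`-action on the talented monoid, `ⁿ(v(i)) = v(i+n)`. -/
def tshift (n : ℤ) : G.TM →+ G.TM :=
  G.tcon.lift (G.tcon.mk'.comp (shiftMul n)) (by
    intro a b h
    show G.tcon.mk' (shiftMul n a) = G.tcon.mk' (shiftMul n b)
    exact (AddCon.eq _).2 (G.tcon_shift n h))

/-- Reachability: there is a (possibly trivial) path from `u` to `v`. -/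
def Reaches (u v : V) : Prop :=
  Relation.ReflTransGen (fun a b => ∃ e : Ed, G.s e = a ∧ G.r e = b) u v

/-- A cycle: a nonempty path of edges, closed up, with distinct source vertices. -/
def IsCycle (p : List Ed) : Prop :=
  ∃ h : p ≠ [], List.Chain' (fun e f => G.r e = G.s f) p ∧
    G.r (p.getLast h) = G.s (p.head h) ∧ (p.map G.s).Nodup

/-- The cycle `p` has an exit: some vertex on it emits an edge not on the cycle. -/
def HasExit (p : List Ed) : Prop :=
  ∃ e : Ed, (∃ f ∈ p, G.s e = G.s f) ∧ e ∉ p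

/-- The cycle `p` has no exit: every vertex on it emits exactly its cycle edge. -/
def NoExit (p : List Ed) : Prop :=
  ∀ e ∈ p, G.emit (G.s e) = {e}

/-- `ℤ`-order-ideals of the talented monoid. -/
def IsOrderIdeal (I : Set G.TM) : Prop :=
  (0 : G.TM) ∈ I ∧ (∀ a b : G.TM, a ∈ I → b ∈ I → a + b ∈ I) ∧
    (∀ (n : ℤ) (a : G.TM), a ∈ I → G.tshift n a ∈ I) ∧
    (∀ a b : G.TM, algLE a b → b ∈ I → a ∈ I)

/-- The smallest `ℤ`-order-ideal of `M_E^{gr}` containing `v(0)`. -/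
def genIdeal (v : V) : Set G.TM :=
  ⋂₀ {I : Set G.TM | G.IsOrderIdeal I ∧ G.tgen v 0 ∈ I}

/-- Minimality in the talented monoid: `0 ≠ b ≤ a` implies `a ≤ b`. -/
def TMin (a : G.TM) : Prop := ∀ b : G.TM, b ≠ 0 → algLE b a → algLE a b

/-- The covering graph `\bar E`. -/
def cover : RFGraph (V × ℤ) (Ed × ℤ) where
  s p := (G.s p.1, p.2)
  r p := (G.r p.1, p.2 + 1)
  emit p := (G.emit p.1).map ⟨fun e => (e, p.2), fun a b h => by
    simpa using congrArg Prod.fst h⟩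
  mem_emit := by
    rintro ⟨e, n⟩ ⟨v, m⟩
    simp only [Finset.mem_map, Function.Embedding.coeFn_mk, Prod.mk.injEq, G.mem_emit]
    constructor
    · rintro ⟨a, ha, rfl, rfl⟩; exact ⟨ha, rfl⟩
    · rintro ⟨rfl, rfl⟩
      first | exact ⟨e, rfl, rfl, rfl⟩ | exact ⟨e, rfl, rfl⟩ | exact ⟨e, by simp⟩ | simp

/-- The set of vertices on a cycle. -/
def cycVerts (p : List Ed) : Set V := {v | ∃ e ∈ p, G.s e = v}

def TStep : Multiset (V × ℤ) → Multiset (V × ℤ) → Prop := Relation.ReflTransGen G.TStep1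

section Rewriting

variable {G} {a b c d : Multiset (V × ℤ)}

theorem TStep1.add_left (h : G.TStep1 a b) (c : Multiset (V × ℤ)) :
    G.TStep1 (c + a) (c + b) := by
  obtain ⟨v, i, hv, hne, rfl⟩ := h
  exact ⟨v, i, Multiset.mem_add.2 (Or.inr hv), hne, by
    rw [Multiset.erase_add_right_pos _ hv, add_assoc]⟩

theorem TStep.add_left (h : G.TStep a b) (c : Multiset (V × ℤ)) : G.TStep (c + a) (c + b) :=
  Relation.ReflTransGen.lift (c + ·) (fun _ _ h => h.add_left c) _ _ h

theorem TStep.add (hab : G.TStep a b) (hcd : G.TStep c d) : G.TStep (a + c) (b + d) := by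
  have h := hab.add_left c
  rw [add_comm c a, add_comm c b] at h
  exact h.trans (hcd.add_left b)

theorem TStep1.diamond (hab : G.TStep1 a b) (hac : G.TStep1 a c) :
    ∃ d, Relation.ReflGen G.TStep1 b d ∧ G.TStep c d := by
  obtain ⟨v, i, hv, hvne, rfl⟩ := hab
  obtain ⟨w, j, hw, hwne, rfl⟩ := hac
  by_cases hvw : (v, i) = (w, j)
  · obtain ⟨rfl, rfl⟩ := Prod.mk.inj hvw
    exact ⟨_, .refl, .refl⟩
  have hw' : (w, j) ∈ a.erase (v, i) := (Multiset.mem_erase_of_ne (Ne.symm hvw)).2 hw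
  have hv' : (v, i) ∈ a.erase (w, j) := (Multiset.mem_erase_of_ne hvw).2 hv
  refine ⟨_, .single ⟨w, j, Multiset.mem_add.2 (Or.inl hw'), hwne, rfl⟩,
    .single ⟨v, i, Multiset.mem_add.2 (Or.inl hv'), hvne, ?_⟩⟩
  rw [Multiset.erase_add_left_pos _ hw', Multiset.erase_add_left_pos _ hv',
    Multiset.erase_comm, add_right_comm]

theorem TStep.tcon (h : G.TStep a b) : G.tcon a b := by
  induction h with
  | refl => exact G.tcon.refl _
  | tail _ hstep ih => exact G.tcon.trans ih (AddConGen.Rel.of _ _ hstep)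

theorem TStep1.card_le (h : G.TStep1 a b) : Multiset.card a ≤ Multiset.card b := by
  obtain ⟨v, i, hv, hne, rfl⟩ := h
  have : 0 < (G.emit v).card := Finset.card_pos.2 (Finset.nonempty_iff_ne_empty.2 hne)
  have : 0 < Multiset.card a := Multiset.card_pos_iff_exists_mem.2 ⟨_, hv⟩
  rw [Multiset.card_add, Multiset.card_map, Multiset.card_erase_of_mem hv, Nat.pred_eq_sub_one]
  change _ ≤ _ + (G.emit v).card
  omega

theorem TStep.card_le (h : G.TStep a b) : Multiset.card a ≤ Multiset.card b := by
  induction h with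
  | refl => exact le_rfl
  | tail _ hstep ih => exact ih.trans hstep.card_le

theorem TStep.eq_zero_of_zero (h : G.TStep 0 b) : b = 0 := by
  induction h with
  | refl => rfl
  | tail _ hstep ih =>
    obtain ⟨v, i, hv, -⟩ := hstep
    exact absurd (ih ▸ hv) (Multiset.notMem_zero _)

theorem TStep.eq_of_emit_eq_empty {v : V} {i : ℤ} (hv : G.emit v = ∅)
    (h : G.TStep {(v, i)} b) : b = {(v, i)} := by
  induction h with
  | refl => rfl
  | tail _ hstep ih =>
    obtain ⟨w, j, hw, hne, -⟩ := hstep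
    obtain ⟨rfl, rfl⟩ := Prod.mk.inj (Multiset.mem_singleton.1 (ih ▸ hw))
    exact absurd hv hne

end Rewriting

theorem tcon_iff_join {a b : Multiset (V × ℤ)} : G.tcon a b ↔ Relation.Join G.TStep a b := by
  refine ⟨fun h => ?_, fun ⟨d, had, hbd⟩ => had.tcon.trans hbd.tcon.symm⟩
  let joinCon : AddCon (Multiset (V × ℤ)) :=
    { r := Relation.Join G.TStep
      iseqv := Relation.equivalence_join_reflTransGen fun _ _ _ => TStep1.diamond
      add' := fun ⟨d, h₁, h₂⟩ ⟨d', h₁', h₂'⟩ =>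
        ⟨d + d', h₁.add h₁', h₂.add h₂'⟩ }
  have hle : addConGen G.TStep1 ≤ joinCon :=
    AddCon.addConGen_le.2 fun x y hxy => (⟨y, .single hxy, .refl⟩ : Relation.Join G.TStep x y)
  exact hle h

def tmk : Multiset (V × ℤ) →+ G.TM := G.tcon.mk'

theorem tmk_surjective : Function.Surjective G.tmk := AddCon.mk'_surjective

theorem tmk_eq_tmk_iff {a b : Multiset (V × ℤ)} :
    G.tmk a = G.tmk b ↔ Relation.Join G.TStep a b :=
  (AddCon.eq _).trans G.tcon_iff_join

variable {G} in
theorem TStep.tmk_eq {a b : Multiset (V × ℤ)} (h : G.TStep a b) : G.tmk a = G.tmk b :=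
  G.tmk_eq_tmk_iff.2 ⟨b, h, .refl⟩

theorem tmk_eq_zero_iff {a : Multiset (V × ℤ)} : G.tmk a = 0 ↔ a = 0 := by
  refine ⟨fun h => ?_, fun h => h ▸ map_zero _⟩
  obtain ⟨d, had, h0d⟩ := G.tmk_eq_tmk_iff.1 (h.trans (map_zero G.tmk).symm)
  have := had.card_le
  rw [h0d.eq_zero_of_zero, Multiset.card_zero, Nat.le_zero, Multiset.card_eq_zero] at this
  exact this

theorem tgen_eq_tmk (v : V) (i : ℤ) : G.tgen v i = G.tmk {(v, i)} := rfl

theorem tgen_ne_zero (v : V) (i : ℤ) : G.tgen v i ≠ 0 :=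
  fun h => Multiset.singleton_ne_zero _ (G.tmk_eq_zero_iff.1 h)

theorem add_eq_zero {x y : G.TM} : x + y = 0 ↔ x = 0 ∧ y = 0 := by
  obtain ⟨a, rfl⟩ := G.tmk_surjective x
  obtain ⟨b, rfl⟩ := G.tmk_surjective y
  rw [← map_add, tmk_eq_zero_iff, tmk_eq_zero_iff, tmk_eq_zero_iff, _root_.add_eq_zero]

theorem tshift_tgen (n : ℤ) (v : V) (i : ℤ) : G.tshift n (G.tgen v i) = G.tgen v (i + n) :=
  AddCon.lift_mk' _ _

theorem range_tshift_tgen (v : V) (i : ℤ) :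
    (Set.range fun n : ℤ => G.tshift n (G.tgen v i)) = Set.range (G.tgen v) := by
  simp_rw [tshift_tgen]
  exact (Equiv.addLeft i).surjective.range_comp (G.tgen v)

/-- The number of paths of length `k` out of `v`, where a path may also stop early at a sink. -/
def pathWeight : ℕ → V → ℕ
  | 0, _ => 1
  | k + 1, v => max 1 (∑ e ∈ G.emit v, pathWeight k (G.r e))

theorem one_le_pathWeight (k : ℕ) (v : V) : 1 ≤ G.pathWeight k v := by
  cases k <;> simp [pathWeight]

theorem pathWeight_succ {v : V} (hv : G.emit v ≠ ∅) (k : ℕ) :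
    G.pathWeight (k + 1) v = ∑ e ∈ G.emit v, G.pathWeight k (G.r e) := by
  obtain ⟨e, he⟩ := Finset.nonempty_iff_ne_empty.2 hv
  exact max_eq_right ((G.one_le_pathWeight k (G.r e)).trans
    (Finset.single_le_sum (f := fun e => G.pathWeight k (G.r e)) (fun _ _ => Nat.zero_le _) he))

def levelWeight (m : ℤ) (a : Multiset (V × ℤ)) : ℕ :=
  (a.map fun q => G.pathWeight (m - q.2).toNat q.1).sum

theorem levelWeight_add (m : ℤ) (a b : Multiset (V × ℤ)) :
    G.levelWeight m (a + b) = G.levelWeight m a + G.levelWeight m b := by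
  simp [levelWeight]

theorem card_le_levelWeight (m : ℤ) (a : Multiset (V × ℤ)) :
    Multiset.card a ≤ G.levelWeight m a := by
  simpa [levelWeight] using
    Multiset.sum_map_le_sum_map (fun _ => 1) _ fun (q : V × ℤ) _ => G.one_le_pathWeight _ q.1

section LevelWeight

variable {G} {a b : Multiset (V × ℤ)} {m : ℤ}

theorem TStep1.levelWeight_eq (h : G.TStep1 a b) (hb : ∀ q ∈ b, q.2 ≤ m) :
    (∀ q ∈ a, q.2 ≤ m) ∧ G.levelWeight m a = G.levelWeight m b := by
  obtain ⟨v, i, hv, hne, rfl⟩ := h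
  obtain ⟨e, he⟩ := Finset.nonempty_iff_ne_empty.2 hne
  have hi : i + 1 ≤ m :=
    hb _ (Multiset.mem_add.2 (Or.inr (Multiset.mem_map.2 ⟨e, he, rfl⟩)))
  have ha : a = {(v, i)} + a.erase (v, i) := by rw [Multiset.singleton_add, Multiset.cons_erase hv]
  refine ⟨fun q hq => ?_, ?_⟩
  · by_cases hqv : q = (v, i)
    · exact hqv ▸ (by omega : i ≤ m)
    · exact hb q (Multiset.mem_add.2 (Or.inl ((Multiset.mem_erase_of_ne hqv).2 hq)))
  · have hk : (m - i).toNat = (m - (i + 1)).toNat + 1 := by omega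
    conv_lhs => rw [ha]
    rw [G.levelWeight_add, G.levelWeight_add, add_comm]
    congr 1
    simp only [levelWeight, Multiset.map_singleton, Multiset.sum_singleton, hk,
      G.pathWeight_succ hne, Multiset.map_map]
    rfl

theorem TStep.levelWeight_eq (h : G.TStep a b) (hb : ∀ q ∈ b, q.2 ≤ m) :
    G.levelWeight m a = G.levelWeight m b := by
  induction h with
  | refl => rfl
  | tail _ hstep ih =>
    obtain ⟨hmid, hw⟩ := hstep.levelWeight_eq hb
    exact (ih hmid).trans hw

end LevelWeight

section Atoms

variable {G}

theorem eq_zero_of_add_eq_self {x y : G.TM} (h : x + y = x) : y = 0 := by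
  obtain ⟨a, rfl⟩ := G.tmk_surjective x
  obtain ⟨b, rfl⟩ := G.tmk_surjective y
  obtain ⟨d, habd, had⟩ := G.tmk_eq_tmk_iff.1 ((map_add G.tmk a b).symm.trans h)
  obtain ⟨m, hm⟩ := (d.map Prod.snd).toFinset.bddAbove
  have hd : ∀ q ∈ d, q.2 ≤ m :=
    fun q hq => hm (Multiset.mem_toFinset.2 (Multiset.mem_map_of_mem _ hq))
  have hw := (habd.levelWeight_eq hd).trans (had.levelWeight_eq hd).symm
  rw [levelWeight_add] at hw
  have := G.card_le_levelWeight m b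
  rw [G.tmk_eq_zero_iff, ← Multiset.card_eq_zero]
  omega

theorem TMin.eq_zero_of_eq_add {a b c : G.TM} (ha : G.TMin a) (hb : b ≠ 0) (h : a = b + c) :
    c = 0 := by
  obtain ⟨d, hd⟩ := ha b hb ⟨c, h⟩
  have : b + (c + d) = b := by rw [← add_assoc, ← h, ← hd]
  exact (G.add_eq_zero.1 (eq_zero_of_add_eq_self this)).1

theorem TMin.exists_eq_singleton {a : Multiset (V × ℤ)} (ha : G.TMin (G.tmk a))
    (h0 : a ≠ 0) : ∃ q, a = {q} := by
  obtain ⟨q, hq⟩ := Multiset.exists_mem_of_ne_zero h0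
  have hsplit : G.tmk a = G.tgen q.1 q.2 + G.tmk (a.erase q) := by
    rw [tgen_eq_tmk, ← map_add, Multiset.singleton_add, Multiset.cons_erase hq]
  have herase := G.tmk_eq_zero_iff.1 (ha.eq_zero_of_eq_add (tgen_ne_zero G _ _) hsplit)
  exact ⟨q, by rw [← Multiset.cons_erase hq, herase]; rfl⟩

end Atoms

open Classical in
noncomputable def succ (v : V) : V := if h : ∃ e, G.emit v = {e} then G.r h.choose else v

def HasUniquePath (v : V) : Prop := ∀ t : ℕ, ∃ e, G.emit (G.succ^[t] v) = {e}

section UniquePath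

variable {G} {v u : V} {e : Ed} {i j : ℤ} {b : Multiset (V × ℤ)}

theorem succ_eq (h : G.emit v = {e}) : G.succ v = G.r e := by
  have hex : ∃ e, G.emit v = {e} := ⟨e, h⟩
  rw [succ, dif_pos hex, Finset.singleton_injective (hex.choose_spec.symm.trans h)]

theorem tStep1_singleton_iff (h : G.emit v = {e}) :
    G.TStep1 {(v, i)} b ↔ b = {(G.succ v, i + 1)} := by
  have hb : ({(v, i)} : Multiset (V × ℤ)).erase (v, i) +
      (G.emit v).val.map (fun e => (G.r e, i + 1)) = {(G.succ v, i + 1)} := by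
    simp [h, succ_eq h]
  constructor
  · rintro ⟨w, j, hw, -, rfl⟩
    obtain ⟨rfl, rfl⟩ := Prod.mk.inj (Multiset.mem_singleton.1 hw)
    exact hb
  · rintro rfl
    exact ⟨v, i, Multiset.mem_singleton_self _, by simp [h], hb.symm⟩

theorem tgen_eq_tgen_succ (h : G.emit v = {e}) (i : ℤ) :
    G.tgen v i = G.tgen (G.succ v) (i + 1) :=
  TStep.tmk_eq (.single ((tStep1_singleton_iff h).2 rfl))

theorem HasUniquePath.iterate (hv : G.HasUniquePath v) (t : ℕ) :
    G.HasUniquePath (G.succ^[t] v) := fun s => by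
  rw [← Function.iterate_add_apply]
  exact hv (s + t)

theorem HasUniquePath.tStep_singleton_iff (hv : G.HasUniquePath v) :
    G.TStep {(v, i)} b ↔ ∃ t : ℕ, b = {(G.succ^[t] v, i + t)} := by
  constructor
  · intro h
    induction h with
    | refl => exact ⟨0, by simp⟩
    | tail _ hstep ih =>
      obtain ⟨t, rfl⟩ := ih
      obtain ⟨e, he⟩ := hv t
      refine ⟨t + 1, ?_⟩
      rw [(tStep1_singleton_iff he).1 hstep, Function.iterate_succ_apply', Nat.cast_succ,
        add_assoc]
  · rintro ⟨t, rfl⟩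
    induction t with
    | zero =>
      rw [Function.iterate_zero_apply, Nat.cast_zero, add_zero]
      exact .refl
    | succ t ih =>
      obtain ⟨e, he⟩ := hv t
      refine ih.tail ((tStep1_singleton_iff he).2 ?_)
      rw [Function.iterate_succ_apply', Nat.cast_succ, add_assoc]

theorem HasUniquePath.tgen_eq_tgen_iterate (hv : G.HasUniquePath v) (i : ℤ) (t : ℕ) :
    G.tgen v i = G.tgen (G.succ^[t] v) (i + t) :=
  (hv.tStep_singleton_iff.2 ⟨t, rfl⟩).tmk_eq

theorem HasUniquePath.tgen_eq_tgen_iff (hv : G.HasUniquePath v) (hu : G.HasUniquePath u) :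
    G.tgen v i = G.tgen u j ↔ ∃ t s : ℕ, G.succ^[t] v = G.succ^[s] u ∧ i + t = j + s := by
  constructor
  · intro h
    obtain ⟨d, hvd, hud⟩ := G.tmk_eq_tmk_iff.1 h
    obtain ⟨t, rfl⟩ := hv.tStep_singleton_iff.1 hvd
    obtain ⟨s, hs⟩ := hu.tStep_singleton_iff.1 hud
    obtain ⟨h₁, h₂⟩ := Prod.mk.inj (Multiset.singleton_inj.1 hs)
    exact ⟨t, s, h₁, h₂⟩
  · rintro ⟨t, s, h₁, h₂⟩
    rw [hv.tgen_eq_tgen_iterate i t, hu.tgen_eq_tgen_iterate j s, h₁, h₂]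

theorem HasUniquePath.tmin_tgen (hv : G.HasUniquePath v) (i : ℤ) : G.TMin (G.tgen v i) := by
  rintro b hb ⟨c, hc⟩
  obtain ⟨B, rfl⟩ := G.tmk_surjective b
  obtain ⟨C, rfl⟩ := G.tmk_surjective c
  rw [← map_add] at hc
  obtain ⟨d, hvd, hd⟩ := G.tmk_eq_tmk_iff.1 hc
  obtain ⟨t, rfl⟩ := hv.tStep_singleton_iff.1 hvd
  have hcard := hd.card_le
  have hB : 0 < Multiset.card B :=
    Multiset.card_pos.2 fun h => hb (by rw [h, map_zero])
  have hC : C = 0 := by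
    rw [Multiset.card_add, Multiset.card_singleton] at hcard
    exact Multiset.card_eq_zero.1 (by omega)
  exact ⟨0, by rw [hc, hC, add_zero, add_zero]⟩

end UniquePath

section Cycle

variable {G} {p q : List Ed} {v w : V}

theorem mem_cycVerts_iff :
    v ∈ G.cycVerts p ↔ ∃ (k : ℕ) (hk : k < p.length), G.s p[k] = v := by
  simp only [cycVerts, Set.mem_ofPred_eq, List.mem_iff_getElem]
  constructor
  · rintro ⟨_, ⟨k, hk, rfl⟩, rfl⟩
    exact ⟨k, hk, rfl⟩
  · rintro ⟨k, hk, rfl⟩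
    exact ⟨_, ⟨k, hk, rfl⟩, rfl⟩

theorem IsCycle.r_getElem (hp : G.IsCycle p) {k : ℕ} (hk : k < p.length) :
    G.r p[k] = G.s (p[(k + 1) % p.length]'(Nat.mod_lt _ (by omega))) := by
  obtain ⟨hne, hchain, hlast, -⟩ := hp
  by_cases hk1 : k + 1 < p.length
  · simp only [Nat.mod_eq_of_lt hk1]
    exact List.isChain_iff_getElem.1 hchain k hk1
  · obtain rfl : k = p.length - 1 := by omega
    simp only [Nat.sub_add_cancel (List.length_pos_iff.2 hne), Nat.mod_self]
    rwa [List.getLast_eq_getElem, List.head_eq_getElem] at hlast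

variable (hp : G.IsCycle p) (hx : G.NoExit p)
include hp hx

theorem iterate_succ_s_getElem {k : ℕ} (hk : k < p.length) (t : ℕ) :
    G.succ^[t] (G.s p[k]) = G.s (p[(k + t) % p.length]'(Nat.mod_lt _ (by omega))) := by
  induction t with
  | zero => simp [Nat.mod_eq_of_lt hk]
  | succ t ih =>
    rw [Function.iterate_succ_apply', ih, succ_eq (hx _ (List.getElem_mem _)), hp.r_getElem]
    simp only [Nat.mod_add_mod, add_assoc]

theorem iterate_succ_mem_cycVerts (hv : v ∈ G.cycVerts p) (t : ℕ) :
    G.succ^[t] v ∈ G.cycVerts p := by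
  obtain ⟨k, hk, rfl⟩ := mem_cycVerts_iff.1 hv
  rw [iterate_succ_s_getElem hp hx hk]
  exact mem_cycVerts_iff.2 ⟨_, _, rfl⟩

theorem NoExit.hasUniquePath (hv : v ∈ G.cycVerts p) : G.HasUniquePath v := fun t => by
  obtain ⟨e, he, hse⟩ := iterate_succ_mem_cycVerts hp hx hv t
  exact ⟨e, hse ▸ hx e he⟩

theorem cycVerts_eq_range_iterate (hv : v ∈ G.cycVerts p) :
    G.cycVerts p = Set.range fun t => G.succ^[t] v := by
  refine Set.Subset.antisymm (fun w hw => ?_)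
    (Set.range_subset_iff.2 (iterate_succ_mem_cycVerts hp hx hv))
  obtain ⟨k, hk, rfl⟩ := mem_cycVerts_iff.1 hv
  obtain ⟨j, hj, rfl⟩ := mem_cycVerts_iff.1 hw
  refine ⟨j + p.length - k, ?_⟩
  have hidx : (k + (j + p.length - k)) % p.length = j := by
    rw [show k + (j + p.length - k) = j + p.length by omega, Nat.add_mod_right, Nat.mod_eq_of_lt hj]
  simp only [iterate_succ_s_getElem hp hx hk, hidx]

theorem iterate_succ_eq_iff (hv : v ∈ G.cycVerts p) {t u : ℕ} :
    G.succ^[t] v = G.succ^[u] v ↔ t ≡ u [MOD p.length] := by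
  obtain ⟨k, hk, rfl⟩ := mem_cycVerts_iff.1 hv
  have hinj (a b : ℕ) (ha : a < p.length) (hb : b < p.length) :
      G.s p[a] = G.s p[b] ↔ a = b := by
    have := hp.2.2.2.getElem_inj_iff (hi := by simpa using ha) (hj := by simpa using hb)
    rwa [List.getElem_map, List.getElem_map] at this
  rw [iterate_succ_s_getElem hp hx hk, iterate_succ_s_getElem hp hx hk, hinj]
  exact ⟨Nat.ModEq.add_left_cancel' k, Nat.ModEq.add_left k⟩

theorem tgen_eq_tgen_iff_modEq (hv : v ∈ G.cycVerts p) {n m : ℤ} :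
    G.tgen v n = G.tgen v m ↔ n ≡ m [ZMOD p.length] := by
  have hpath := hx.hasUniquePath hp hv
  simp_rw [hpath.tgen_eq_tgen_iff hpath, iterate_succ_eq_iff hp hx hv, ← Int.natCast_modEq_iff]
  constructor
  · rintro ⟨t, u, htu, hidx⟩
    exact htu.add_right_cancel (hidx ▸ Int.ModEq.refl _)
  · intro h
    refine ⟨(m - n).toNat, (n - m).toNat, ?_, by omega⟩
    rw [Int.modEq_iff_dvd] at h ⊢
    rw [show ((n - m).toNat : ℤ) - (m - n).toNat = -(m - n) by omega]
    exact dvd_neg.2 h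

theorem tshift_length_tgen (hv : v ∈ G.cycVerts p) (i : ℤ) :
    G.tshift p.length (G.tgen v i) = G.tgen v i := by
  rw [tshift_tgen, tgen_eq_tgen_iff_modEq hp hx hv]
  exact Int.add_modEq_right

theorem card_range_tgen (hv : v ∈ G.cycVerts p) : Nat.card (Set.range (G.tgen v)) = p.length := by
  have hℓ : 0 < p.length := List.length_pos_iff.2 hp.1
  have hinj : Function.Injective fun k : Fin p.length => G.tgen v k := fun k k' h => by
    have := Int.natCast_modEq_iff.1 ((tgen_eq_tgen_iff_modEq hp hx hv).1 h)
    exact Fin.ext (by rwa [Nat.ModEq, Nat.mod_eq_of_lt k.2, Nat.mod_eq_of_lt k'.2] at this)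
  have hrange : Set.range (fun k : Fin p.length => G.tgen v k) = Set.range (G.tgen v) := by
    refine Set.Subset.antisymm (Set.range_subset_iff.2 fun k => ⟨k, rfl⟩) ?_
    rintro _ ⟨n, rfl⟩
    have hmod : 0 ≤ n % p.length ∧ n % p.length < p.length :=
      ⟨Int.emod_nonneg _ (by omega), Int.emod_lt_of_pos _ (by omega)⟩
    refine ⟨⟨(n % p.length).toNat, by omega⟩, (tgen_eq_tgen_iff_modEq hp hx hv).2 ?_⟩
    simpa [Int.toNat_of_nonneg hmod.1] using Int.mod_modEq n p.length
  rw [← hrange, Nat.card_range_of_injective hinj, Nat.card_eq_fintype_card, Fintype.card_fin]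

theorem range_tgen_eq_of_mem_cycVerts (hv : v ∈ G.cycVerts p) (hw : w ∈ G.cycVerts p) :
    Set.range (G.tgen v) = Set.range (G.tgen w) := by
  obtain ⟨t, rfl⟩ := cycVerts_eq_range_iterate hp hx hv ▸ hw
  have hshift : G.tgen v = fun n => G.tgen (G.succ^[t] v) (n + t) :=
    funext fun n => (hx.hasUniquePath hp hv).tgen_eq_tgen_iterate n t
  rw [hshift]
  exact (Equiv.addRight (t : ℤ)).surjective.range_comp (G.tgen (G.succ^[t] v))

theorem biUnion_range_tgen_cycVerts (hv : v ∈ G.cycVerts p) :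
    ⋃ w ∈ G.cycVerts p, Set.range (G.tgen w) = Set.range (G.tgen v) :=
  (Set.iUnion₂_congr fun _ hw => range_tgen_eq_of_mem_cycVerts hp hx hw hv).trans
    (Set.biUnion_const ⟨v, hv⟩ _)

theorem cycVerts_eq_of_range_tgen_eq (hq : G.IsCycle q) (hy : G.NoExit q)
    (hv : v ∈ G.cycVerts p) (hw : w ∈ G.cycVerts q)
    (h : Set.range (G.tgen v) = Set.range (G.tgen w)) : G.cycVerts p = G.cycVerts q := by
  obtain ⟨m, hm⟩ : G.tgen v 0 ∈ Set.range (G.tgen w) := h ▸ ⟨0, rfl⟩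
  obtain ⟨t, s, hts, -⟩ :=
    ((hx.hasUniquePath hp hv).tgen_eq_tgen_iff (hy.hasUniquePath hq hw)).1 hm.symm
  rw [cycVerts_eq_range_iterate hp hx (iterate_succ_mem_cycVerts hp hx hv t), hts,
    ← cycVerts_eq_range_iterate hq hy (iterate_succ_mem_cycVerts hq hy hw s)]

end Cycle

section Classification

variable {G} {v z : V} {i n : ℤ}

theorem TMin.exists_emit_eq_singleton (hmin : G.TMin (G.tgen v i)) (hn : n ≠ 0)
    (hper : G.tshift n (G.tgen v i) = G.tgen v i) : ∃ e, G.emit v = {e} := by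
  by_cases hsink : G.emit v = ∅
  · rw [tshift_tgen, tgen_eq_tmk, tgen_eq_tmk, G.tmk_eq_tmk_iff] at hper
    obtain ⟨d, h₁, h₂⟩ := hper
    have h := (h₁.eq_of_emit_eq_empty hsink).symm.trans (h₂.eq_of_emit_eq_empty hsink)
    simp only [Multiset.singleton_inj, Prod.mk.injEq, add_eq_left, true_and] at h
    exact absurd h hn
  · have hstep : G.TStep1 {(v, i)} ((G.emit v).val.map fun e => (G.r e, i + 1)) :=
      ⟨v, i, Multiset.mem_singleton_self _, hsink, by simp⟩
    rw [tgen_eq_tmk, TStep.tmk_eq (.single hstep)] at hmin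
    obtain ⟨q, hq⟩ := hmin.exists_eq_singleton (by simpa using hsink)
    exact Finset.card_eq_one.1 (by simpa using congrArg Multiset.card hq)

theorem TMin.hasUniquePath (hmin : G.TMin (G.tgen v i)) (hn : n ≠ 0)
    (hper : G.tshift n (G.tgen v i) = G.tgen v i) : G.HasUniquePath v := by
  have key (t : ℕ) :
      G.tgen v i = G.tgen (G.succ^[t] v) (i + t) ∧ ∃ e, G.emit (G.succ^[t] v) = {e} := by
    induction t with
    | zero => simpa using hmin.exists_emit_eq_singleton hn hper
    | succ t ih =>
      obtain ⟨h, e, he⟩ := ih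
      have h' : G.tgen v i = G.tgen (G.succ^[t + 1] v) (i + ↑(t + 1)) := by
        rw [h, tgen_eq_tgen_succ he, Function.iterate_succ_apply', Nat.cast_succ, add_assoc]
      exact ⟨h', (h' ▸ hmin).exists_emit_eq_singleton hn (h' ▸ hper)⟩
  exact fun t => (key t).2

theorem HasUniquePath.exists_cycle (hz : G.HasUniquePath z) {d : ℕ} (hd : 0 < d)
    (hper : Function.IsPeriodicPt G.succ d z) :
    ∃ p, G.IsCycle p ∧ G.NoExit p ∧ z ∈ G.cycVerts p := by
  choose ed hed using hz
  have hs (k : ℕ) : G.s (ed k) = G.succ^[k] z :=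
    (G.mem_emit _ _).1 (by rw [hed k]; exact Finset.mem_singleton_self _)
  have hr (k : ℕ) : G.r (ed k) = G.succ^[k + 1] z := by
    rw [Function.iterate_succ_apply', succ_eq (hed k)]
  have hℓ := hper.minimalPeriod_pos hd
  set ℓ := Function.minimalPeriod G.succ z
  have hne : (List.range ℓ).map ed ≠ [] := by simp; omega
  refine ⟨(List.range ℓ).map ed, ⟨hne, ?_, ?_, ?_⟩, ?_, ed 0, ?_, hs 0⟩
  · exact List.isChain_iff_getElem.2 fun j hj => by simp [hr, hs]
  · simp only [List.getLast_map, List.head_map, List.getLast_range, List.head_range, hr, hs,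
      Nat.sub_add_cancel hℓ, Function.iterate_zero_apply]
    exact Function.iterate_minimalPeriod
  · rw [List.map_map]
    refine List.Nodup.map_on (fun a ha b hb hab => ?_) List.nodup_range
    simp only [Function.comp_apply, hs] at hab
    exact Function.iterate_injOn_Iio_minimalPeriod (List.mem_range.1 ha) (List.mem_range.1 hb) hab
  · intro e he
    obtain ⟨k, -, rfl⟩ := List.mem_map.1 he
    rw [hs]
    exact hed k
  · exact List.mem_map.2 ⟨0, List.mem_range.2 hℓ, rfl⟩

theorem exists_cycle_of_tmin_periodic {a : G.TM} (ha : a ≠ 0) (hmin : G.TMin a) (hn : n ≠ 0)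
    (hper : G.tshift n a = a) :
    ∃ p, G.IsCycle p ∧ G.NoExit p ∧ ∃ v ∈ G.cycVerts p, ∃ i, a = G.tgen v i := by
  obtain ⟨A, rfl⟩ := G.tmk_surjective a
  obtain ⟨⟨v, i⟩, rfl⟩ := hmin.exists_eq_singleton fun h => ha (by rw [h, map_zero])
  rw [← tgen_eq_tmk] at hmin hper ⊢
  have hv := hmin.hasUniquePath hn hper
  rw [tshift_tgen, hv.tgen_eq_tgen_iff hv] at hper
  obtain ⟨t, s, hts, hidx⟩ := hper
  obtain ⟨k, d, hd, hk⟩ :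
      ∃ k d, 0 < d ∧ Function.IsPeriodicPt G.succ d (G.succ^[k] v) := by
    rcases lt_or_gt_of_ne (show t ≠ s by omega) with h | h
    · refine ⟨t, s - t, by omega, ?_⟩
      rw [Function.IsPeriodicPt, Function.IsFixedPt, ← Function.iterate_add_apply,
        Nat.sub_add_cancel h.le, hts]
    · refine ⟨s, t - s, by omega, ?_⟩
      rw [Function.IsPeriodicPt, Function.IsFixedPt, ← Function.iterate_add_apply,
        Nat.sub_add_cancel h.le, hts]
  obtain ⟨p, hp, hx, hz⟩ := (hv.iterate k).exists_cycle hd hk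
  exact ⟨p, hp, hx, _, hz, i + k, hv.tgen_eq_tgen_iterate i k⟩

end Classification

end RFGraph

/-- There is a bijection between cycles without exits in `E` (identified by their vertex
sets) and orbits of minimal periodic elements of `M_E^{gr}`, sending a cycle to the orbit
of any of its vertices; the length of the cycle equals the cardinality of the orbit. -/
theorem cycles_no_exit_bij_orbits {V Ed : Type} [DecidableEq V] (G : RFGraph V Ed) :
    ∃ f : {S : Set V // ∃ p : List Ed, G.IsCycle p ∧ G.NoExit p ∧ S = G.cycVerts p} →
        {T : Set G.TM // ∃ a : G.TM, a ≠ 0 ∧ G.TMin a ∧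
          (∃ n : ℤ, n ≠ 0 ∧ G.tshift n a = a) ∧
          T = Set.range fun n : ℤ => G.tshift n a},
      Function.Bijective f ∧
      (∀ (p : List Ed) (hp : G.IsCycle p) (hne : G.NoExit p) (e : Ed), e ∈ p →
        (f ⟨G.cycVerts p, p, hp, hne, rfl⟩ : Set G.TM) =
          Set.range fun n : ℤ => G.tshift n (G.tgen (G.s e) 0)) ∧
      (∀ (p : List Ed) (hp : G.IsCycle p) (hne : G.NoExit p),
        Nat.card (f ⟨G.cycVerts p, p, hp, hne, rfl⟩ : Set G.TM) = p.length) := by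
  have hmem {p : List Ed} (hp : G.IsCycle p) : G.s (p.head hp.1) ∈ G.cycVerts p :=
    ⟨_, List.head_mem _, rfl⟩
  refine ⟨fun S => ⟨⋃ v ∈ S.1, Set.range (G.tgen v), ?_⟩, ⟨?_, ?_⟩, ?_, ?_⟩
  · obtain ⟨_, p, hp, hx, rfl⟩ := S
    refine ⟨_, G.tgen_ne_zero _ 0, (hx.hasUniquePath hp (hmem hp)).tmin_tgen 0,
      ⟨p.length, by simpa using hp.1, G.tshift_length_tgen hp hx (hmem hp) 0⟩, ?_⟩
    rw [G.range_tshift_tgen, G.biUnion_range_tgen_cycVerts hp hx (hmem hp)]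
  · rintro ⟨_, p, hp, hx, rfl⟩ ⟨_, q, hq, hy, rfl⟩ h
    rw [Subtype.mk.injEq, G.biUnion_range_tgen_cycVerts hp hx (hmem hp),
      G.biUnion_range_tgen_cycVerts hq hy (hmem hq)] at h
    exact Subtype.ext (G.cycVerts_eq_of_range_tgen_eq hp hx hq hy (hmem hp) (hmem hq) h)
  · rintro ⟨_, a, ha, hmin, ⟨n, hn, hper⟩, rfl⟩
    obtain ⟨p, hp, hx, v, hv, i, rfl⟩ := G.exists_cycle_of_tmin_periodic ha hmin hn hper
    exact ⟨⟨_, p, hp, hx, rfl⟩, Subtype.ext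
      ((G.biUnion_range_tgen_cycVerts hp hx hv).trans (G.range_tshift_tgen v i).symm)⟩
  · intro p hp hx e he
    rw [G.range_tshift_tgen]
    exact G.biUnion_range_tgen_cycVerts hp hx ⟨e, he, rfl⟩
  · intro p hp hx
    show Nat.card (⋃ v ∈ G.cycVerts p, Set.range (G.tgen v)) = p.length
    rw [G.biUnion_range_tgen_cycVerts hp hx (hmem hp), G.card_range_tgen hp hx (hmem hp)]
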